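/- Networks 1 and 2 imply that S(Y_i; U) =ι S(Z_i; U) =ι S(X_i^j; U) =ι T_i for every i ∈ {1,…,n} and j ∈ {1,…,k}; that is, for every joint distribution of the variables U_i, Y_i, Z_i, X_i^j satisfying both Network 1 and Network 2, the minimal sufficient statistics of Y_i, of Z_i, and of each X_i^j for U are all informationally equivalent to T_i = S((X_i^1,…,X_i^k, Y_i, Z_i); U). -/

import Mathlib

namespace Paper

/-- The probability of an event under a probability mass function. -/
noncomputable def pr {Ω : Type} (μ : PMF Ω) (E : Set Ω) : ENNReal :=
  μ.toOuterMeasure E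

/-- Conditional independence `X ⊥⊥ Y | Z`:
`p(x,y,z) p(z) = p(x,z) p(y,z)` for all `x, y, z`. -/
def CondIndep {Ω α β γ : Type} (μ : PMF Ω) (X : Ω → α) (Y : Ω → β) (Z : Ω → γ) : Prop :=
  ∀ (x : α) (y : β) (z : γ),
    pr μ {ω | X ω = x ∧ Y ω = y ∧ Z ω = z} * pr μ {ω | Z ω = z}
      = pr μ {ω | X ω = x ∧ Z ω = z} * pr μ {ω | Y ω = y ∧ Z ω = z}

/-- Unconditional independence `X ⊥⊥ Y`. -/
def Indep {Ω α β : Type} (μ : PMF Ω) (X : Ω → α) (Y : Ω → β) : Prop :=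
  ∀ (x : α) (y : β),
    pr μ {ω | X ω = x ∧ Y ω = y} = pr μ {ω | X ω = x} * pr μ {ω | Y ω = y}

/-- `X ≥ι Y`: `X` functionally determines `Y` (with probability one). -/
def FunDep {Ω α β : Type} (μ : PMF Ω) (X : Ω → α) (Y : Ω → β) : Prop :=
  ∃ f : α → β, ∀ ω ∈ μ.support, Y ω = f (X ω)

/-- `X =ι Y`: informational equivalence. -/
def InfoEq {Ω α β : Type} (μ : PMF Ω) (X : Ω → α) (Y : Ω → β) : Prop :=
  FunDep μ X Y ∧ FunDep μ Y X

/-- The random variable `X` has finite support. -/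
def FinSupp {Ω α : Type} (μ : PMF Ω) (X : Ω → α) : Prop :=
  (X '' μ.support).Finite

/-- The random variable `X` has support of cardinality at most `ℓ`. -/
def CardLE {Ω α : Type} (μ : PMF Ω) (X : Ω → α) (ℓ : ℕ) : Prop :=
  ∃ s : Finset α, s.card ≤ ℓ ∧ ∀ ω ∈ μ.support, X ω ∈ s

/-- `X` is uniformly distributed with support of cardinality `ℓ`. -/
def UniformCard {Ω α : Type} (μ : PMF Ω) (X : Ω → α) (ℓ : ℕ) : Prop :=
  ∃ S : Finset α, S.card = ℓ ∧ (∀ x ∈ S, pr μ {ω | X ω = x} = (ℓ : ENNReal)⁻¹) ∧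
    ∀ x, x ∉ S → pr μ {ω | X ω = x} = 0

/-- The probability mass function of the random variable `X`. -/
noncomputable def distOf {Ω α : Type} (μ : PMF Ω) (X : Ω → α) : α → ENNReal :=
  fun x => pr μ {ω | X ω = x}

/-- `p ⪰ q` : `p` majorizes `q`, i.e. for every `k`, the sum of the `k` largest values
of `p` is at least the sum of the `k` largest values of `q`. -/
def Majorizes (p q : ℕ → ENNReal) : Prop :=
  ∀ s : Finset ℕ, ∃ t : Finset ℕ, t.card ≤ s.card ∧ ∑ x ∈ s, q x ≤ ∑ x ∈ t, p x

/-- `T` is a sufficient statistic of `X` for `U`: `X ≥ι T` and `U ⊥⊥ X | T`. -/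
def SuffStat {Ω α β γ : Type} (μ : PMF Ω) (X : Ω → α) (U : Ω → β) (T : Ω → γ) : Prop :=
  FunDep μ X T ∧ CondIndep μ U X T

/-- `T` is a minimal sufficient statistic of `X` for `U`. -/
def MinSuffStat {Ω α β γ : Type} (μ : PMF Ω) (X : Ω → α) (U : Ω → β) (T : Ω → γ) : Prop :=
  SuffStat μ X U T ∧
    ∀ (δ : Type) (T' : Ω → δ), SuffStat μ X U T' → FunDep μ T' T

/-- Mutual independence of the subfamily `(V i)_{i ∈ s}`: each `V i` (for `i ∈ s`) is
independent of the joint variable of the others. -/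
def MutIndepOn {Ω ι : Type} {β : ι → Type} (μ : PMF Ω) (V : ∀ i, Ω → β i)
    (s : Finset ι) : Prop :=
  ∀ i ∈ s, Indep μ (V i) (fun ω => fun j : {j // j ∈ s ∧ j ≠ i} => V j.1 ω)

/-- Mutual independence of the whole family `(V i)_i`. -/
def MutIndep {Ω ι : Type} {β : ι → Type} (μ : PMF Ω) (V : ∀ i, Ω → β i) : Prop :=
  ∀ i, Indep μ (V i) (fun ω => fun j : {j // j ≠ i} => V j.1 ω)

/-- Mutual independence of `(V i)_{i ∈ C}` for a list `C` of indices. -/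
def MutIndepL {Ω : Type} (μ : PMF Ω) (V : ℕ → Ω → ℕ) (C : List ℕ) : Prop :=
  ∀ i ∈ C, Indep μ (V i) (fun ω => fun j : {j // j ∈ C ∧ j ≠ i} => V j.1 ω)

/-- The joint random variable `(X a)_{a ∈ A}` for a list `A` of indices. -/
def jointOn {Ω : Type} (X : ℕ → Ω → ℕ) (A : List ℕ) : Ω → ({a : ℕ // a ∈ A} → ℕ) :=
  fun ω a => X a.1 ω

/-- The joint random variable `(T i)_{i ∈ S}` for a finset `S` of indices. -/
def jointFin {Ω ι : Type} {β : ι → Type} (T : ∀ i, Ω → β i) (S : Finset ι) :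
    Ω → ((i : {i // i ∈ S}) → β i.1) :=
  fun ω i => T i.1 ω

/-- The set of parents (in-neighbours) of `w` in the directed graph with edge relation `E`. -/
def parentSet {ν : Type} (E : ν → ν → Prop) (w : ν) : Set ν := {v | E v w}

/-- The set of nodes that are neither descendants nor parents of `w`. -/
def nonDescSet {ν : Type} (E : ν → ν → Prop) (w : ν) : Set ν :=
  {v | ¬ Relation.ReflTransGen E w v ∧ ¬ E v w}

/-- The collection of random variables `(X v)_v` satisfies the Bayesian network structure
with edge relation `E`: each variable is conditionally independent of its
non-descendant non-parent variables given its parent variables. -/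
def SatisfiesBN {Ω ν : Type} {β : ν → Type} (μ : PMF Ω) (X : ∀ v, Ω → β v)
    (E : ν → ν → Prop) : Prop :=
  ∀ w : ν, CondIndep μ (X w)
    (fun ω => fun v : nonDescSet E w => X v.1 ω)
    (fun ω => fun v : parentSet E w => X v.1 ω)

/-- `E` is (the edge list of) a directed acyclic graph on the nodes `{0, …, n-1}`. -/
def IsDAG (n : ℕ) (E : List (ℕ × ℕ)) : Prop :=
  (∀ e ∈ E, e.1 < n ∧ e.2 < n) ∧
    ∀ i : ℕ, ¬ Relation.TransGen (fun a c => (a, c) ∈ E) i i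

/-- The edge relation on `Fin n` determined by an edge list. -/
def edgeRelOn (n : ℕ) (E : List (ℕ × ℕ)) : Fin n → Fin n → Prop :=
  fun i j => ((i : ℕ), (j : ℕ)) ∈ E

/-- `(X_0, …, X_{n-1})` satisfies the Bayesian network given by the edge list `E`. -/
def SatisfiesBNn {Ω : Type} (μ : PMF Ω) (n : ℕ) (X : ℕ → Ω → ℕ)
    (E : List (ℕ × ℕ)) : Prop :=
  SatisfiesBN μ (fun i : Fin n => X (i : ℕ)) (edgeRelOn n E)

/-- `(A, C, B) ∈ I(G_1, …, G_m)`: every collection of finitely supported discrete random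
variables satisfying all the network structures in `Gs` satisfies `X_A ⊥⊥ X_B | X_C`. -/
def ImpliedCI (n : ℕ) (Gs : List (List (ℕ × ℕ))) (A C B : List ℕ) : Prop :=
  ∀ (Ω : Type) (μ : PMF Ω) (X : ℕ → Ω → ℕ),
    (∀ i, i < n → FinSupp μ (X i)) →
    (∀ G ∈ Gs, SatisfiesBNn μ n X G) →
    CondIndep μ (jointOn X A) (jointOn X B) (jointOn X C)

/-- Two lists are disjoint as sets. -/
def DisjointL (A B : List ℕ) : Prop := ∀ a ∈ A, a ∉ B

end Paper
namespace Paper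

/-- The nodes of the two networks: `u i = U_i`, `y i = Y_i`, `z i = Z_i`,
`x i j = X_i^j`. -/
inductive BNode (n k : ℕ) : Type
  | u : Fin n → BNode n k
  | y : Fin n → BNode n k
  | z : Fin n → BNode n k
  | x : Fin n → Fin k → BNode n k

/-- Edge relation of Network 1: `U_i → U_{i'}` for `i ∈ C1, i' ∉ C1` and for
`i, i' ∉ C1` with `i < i'`; and `U_i → Y_i → X_i^1 → ⋯ → X_i^k → Z_i`. -/
def edge1 (n k : ℕ) (C1 : Finset (Fin n)) : BNode n k → BNode n k → Prop :=
  fun v w => match v, w with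
  | .u i, .u i' => (i ∈ C1 ∧ i' ∉ C1) ∨ (i ∉ C1 ∧ i' ∉ C1 ∧ i < i')
  | .u i, .y i' => i = i'
  | .y i, .x i' j => i = i' ∧ (j : ℕ) = 0
  | .x i j, .x i' j' => i = i' ∧ (j' : ℕ) = (j : ℕ) + 1
  | .x i j, .z i' => i = i' ∧ (j : ℕ) = k - 1
  | _, _ => False

/-- Edge relation of Network 2: `U_i → U_{i'}` for `i ∈ C2, i' ∉ C2` and for
`i, i' ∉ C2` with `i < i'`; `U_i → Z_i → Y_i`; `U_i → X_i^j` for `i ≠ b j`; and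
`X_i^j → X_{b_j}^j` for `i ∈ A j`. -/
def edge2 (n k : ℕ) (C2 : Finset (Fin n)) (A : Fin k → Finset (Fin n))
    (b : Fin k → Fin n) : BNode n k → BNode n k → Prop :=
  fun v w => match v, w with
  | .u i, .u i' => (i ∈ C2 ∧ i' ∉ C2) ∨ (i ∉ C2 ∧ i' ∉ C2 ∧ i < i')
  | .u i, .z i' => i = i'
  | .z i, .y i' => i = i'
  | .u i, .x i' j => i = i' ∧ i' ≠ b j
  | .x i j, .x i' j' => j = j' ∧ i' = b j ∧ i ∈ A j
  | _, _ => False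

/-- The joint random variable `U = (U_1, …, U_n)`. -/
def Ujoint {Ω : Type} {n k : ℕ} (X : BNode n k → Ω → ℕ) : Ω → (Fin n → ℕ) :=
  fun ω i => X (.u i) ω

/-- The joint random variable `((X_i^j)_{j=1}^k, Y_i, Z_i)`. -/
def tupleVar {Ω : Type} {n k : ℕ} (X : BNode n k → Ω → ℕ) (i : Fin n) :
    Ω → ((Fin k → ℕ) × ℕ × ℕ) :=
  fun ω => (fun j => X (.x i j) ω, X (.y i) ω, X (.z i) ω)

end Paper

/-! The tuple `W_i = (X_i^1, …, X_i^k, Y_i, Z_i)` has `T_i` as minimal sufficient statistic, and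
a coordinate `V` of `W_i` inherits it as soon as `U ⊥⊥ W_i | V`: then `V` is a sufficient
statistic of `W_i`, and so is every sufficient statistic of `V`, which therefore determines `T_i`.

Network 1 makes `Y_i → X_i^1 → ⋯ → X_i^k → Z_i` a Markov chain whose past contains `U`, which
gives `U ⊥⊥ W_i | Y_i` and `(U, past) ⊥⊥ future | X_i^j`. Network 2 gives
`(U, X_i) ⊥⊥ Y_i | Z_i`. Passing from `Y_i` to `Z_i`, and then from `Z_i` to `X_i^j`, is an
instance of the intersection property of conditional independence; it needs no positivity here,
because the Markov property itself connects the fibres on which the conditional law of `U` is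
compared. -/

namespace Paper

section Probability

variable {Ω : Type} {μ : PMF Ω}

theorem pr_congr_ae {E F : Set Ω} (h : ∀ ω ∈ μ.support, (ω ∈ E ↔ ω ∈ F)) :
    pr μ E = pr μ F :=
  μ.toOuterMeasure_apply_eq_of_inter_support_eq <| Set.ext fun ω =>
    ⟨fun hω => ⟨(h ω hω.2).1 hω.1, hω.2⟩, fun hω => ⟨(h ω hω.2).2 hω.1, hω.2⟩⟩

theorem pr_congr {P Q : Ω → Prop} (h : ∀ ω, P ω ↔ Q ω) :
    pr μ {ω | P ω} = pr μ {ω | Q ω} :=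
  congrArg (pr μ) (Set.ext h)

theorem pr_mono {E F : Set Ω} (h : E ⊆ F) : pr μ E ≤ pr μ F :=
  μ.toOuterMeasure.mono h

theorem pr_eq_zero_of_subset {E F : Set Ω} (h : E ⊆ F) (hF : pr μ F = 0) : pr μ E = 0 :=
  le_antisymm ((pr_mono h).trans hF.le) zero_le

theorem pr_eq_zero_of_ae_not {P : Ω → Prop} (h : ∀ ω ∈ μ.support, ¬ P ω) :
    pr μ {ω | P ω} = 0 :=
  (μ.toOuterMeasure_apply_eq_zero_iff _).2 <| Set.disjoint_left.2 fun ω hω hP => h ω hω hP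

theorem pr_ne_top (E : Set Ω) : pr μ E ≠ ⊤ :=
  ne_top_of_le_ne_top ENNReal.one_ne_top <|
    (pr_mono (Set.subset_univ E)).trans ((μ.toOuterMeasure_apply_eq_one_iff _).2 le_top).le

theorem pr_eq_tsum_fiber {β : Type} (B : Ω → β) (P : Ω → Prop) :
    pr μ {ω | P ω} = ∑' b, pr μ {ω | P ω ∧ B ω = b} := by
  simp only [pr, PMF.toOuterMeasure_apply]
  rw [ENNReal.tsum_comm]
  refine tsum_congr fun ω => ?_
  rw [tsum_eq_single (B ω) fun b hb => Set.indicator_of_notMem (fun h => hb h.2.symm) μ]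
  by_cases hP : P ω <;> simp [hP]

end Probability

section FunDep

variable {Ω γ δ ε : Type} {μ : PMF Ω}

theorem FunDep.trans {A : Ω → γ} {B : Ω → δ} {C : Ω → ε} (h₁ : FunDep μ A B)
    (h₂ : FunDep μ B C) : FunDep μ A C :=
  let ⟨f, hf⟩ := h₁
  let ⟨g, hg⟩ := h₂
  ⟨g ∘ f, fun ω hω => (hg ω hω).trans (congrArg g (hf ω hω))⟩

theorem funDep_comp (A : Ω → γ) (g : γ → δ) : FunDep μ A (fun ω => g (A ω)) :=
  ⟨g, fun _ _ => rfl⟩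

theorem FunDep.prod {X : Ω → γ} {A : Ω → δ} {B : Ω → ε} (hA : FunDep μ X A)
    (hB : FunDep μ X B) : FunDep μ X (fun ω => (A ω, B ω)) :=
  let ⟨f, hf⟩ := hA
  let ⟨g, hg⟩ := hB
  ⟨fun x => (f x, g x), fun ω hω => Prod.ext (hf ω hω) (hg ω hω)⟩

end FunDep

section CondIndep

variable {Ω α β γ δ : Type} {μ : PMF Ω} {A : Ω → α} {B : Ω → β} {C : Ω → γ} {D : Ω → δ}

-- `κ` is the conditional probability of `A = a` given `C = c`.
theorem condIndep_iff_exists_mul : CondIndep μ A B C ↔ ∀ a c, ∃ κ, ∀ b,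
    pr μ {ω | A ω = a ∧ B ω = b ∧ C ω = c} = κ * pr μ {ω | B ω = b ∧ C ω = c} := by
  refine ⟨fun h a c => ?_, fun h a b c => ?_⟩
  · by_cases hc : pr μ {ω | C ω = c} = 0
    · exact ⟨0, fun b => by rw [zero_mul]; exact pr_eq_zero_of_subset (fun ω hω => hω.2.2) hc⟩
    · refine ⟨pr μ {ω | A ω = a ∧ C ω = c} / pr μ {ω | C ω = c}, fun b => ?_⟩
      rw [← ENNReal.mul_left_inj hc (pr_ne_top _), h a b c, mul_right_comm,
        ENNReal.div_mul_cancel hc (pr_ne_top _)]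
  · obtain ⟨κ, hκ⟩ := h a c
    have hac : pr μ {ω | A ω = a ∧ C ω = c} = κ * pr μ {ω | C ω = c} := by
      rw [pr_eq_tsum_fiber B, pr_eq_tsum_fiber B (fun ω => C ω = c), ← ENNReal.tsum_mul_left]
      refine tsum_congr fun b => ?_
      have := hκ b
      simp only [and_comm, and_left_comm] at this ⊢
      exact this
    rw [hκ b, hac]
    ring

theorem CondIndep.symm (h : CondIndep μ A B C) : CondIndep μ B A C := fun b a c => by
  have := h a b c
  simp only [and_left_comm] at this ⊢
  rw [this, mul_comm]

theorem CondIndep.congr_ae {A' : Ω → α} {B' : Ω → β} {C' : Ω → γ} (h : CondIndep μ A B C)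
    (hA : ∀ ω ∈ μ.support, A' ω = A ω) (hB : ∀ ω ∈ μ.support, B' ω = B ω)
    (hC : ∀ ω ∈ μ.support, C' ω = C ω) : CondIndep μ A' B' C' := fun a b c => by
  convert h a b c using 2 <;>
    exact pr_congr_ae fun ω hω => by simp only [Set.mem_ofPred_eq, hA ω hω, hB ω hω, hC ω hω]

theorem CondIndep.comp_right (h : CondIndep μ A B C) (g : β → δ) :
    CondIndep μ A (fun ω => g (B ω)) C := by
  rw [condIndep_iff_exists_mul] at h ⊢
  intro a c
  obtain ⟨κ, hκ⟩ := h a c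
  refine ⟨κ, fun d => ?_⟩
  rw [pr_eq_tsum_fiber B, pr_eq_tsum_fiber B (fun ω => g (B ω) = d ∧ C ω = c),
    ← ENNReal.tsum_mul_left]
  refine tsum_congr fun b => ?_
  by_cases hb : g b = d
  · subst hb
    rw [pr_congr fun ω => show (A ω = a ∧ g (B ω) = g b ∧ C ω = c) ∧ B ω = b ↔
        A ω = a ∧ B ω = b ∧ C ω = c by grind,
      pr_congr fun ω => show (g (B ω) = g b ∧ C ω = c) ∧ B ω = b ↔ B ω = b ∧ C ω = c by grind,
      hκ b]
  · rw [pr_eq_zero_of_ae_not fun ω _ ⟨⟨_, h2, _⟩, h4⟩ => hb (h4 ▸ h2),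
      pr_eq_zero_of_ae_not fun ω _ ⟨⟨h2, _⟩, h4⟩ => hb (h4 ▸ h2), mul_zero]

theorem CondIndep.of_funDep_right {B' : Ω → δ} (h : CondIndep μ A B C) (hB : FunDep μ B B') :
    CondIndep μ A B' C :=
  let ⟨g, hg⟩ := hB
  (h.comp_right g).congr_ae (fun _ _ => rfl) hg (fun _ _ => rfl)

theorem CondIndep.of_funDep_left {A' : Ω → δ} (h : CondIndep μ A B C) (hA : FunDep μ A A') :
    CondIndep μ A' B C :=
  (h.symm.of_funDep_right hA).symm

theorem CondIndep.of_infoEq_cond {C' : Ω → δ} (h : CondIndep μ A B C) (hC : InfoEq μ C C') :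
    CondIndep μ A B C' := by
  obtain ⟨⟨f, hf⟩, ⟨g, hg⟩⟩ := hC
  intro a b c
  by_cases hc : ∃ ω₀ ∈ μ.support, C' ω₀ = c
  · obtain ⟨ω₀, hω₀, rfl⟩ := hc
    have key : ∀ ω ∈ μ.support, C' ω = C' ω₀ ↔ C ω = g (C' ω₀) := fun ω hω =>
      ⟨fun h => by rw [hg ω hω, h], fun h => by rw [hf ω hω, h, ← hg ω₀ hω₀, ← hf ω₀ hω₀]⟩
    convert h a b (g (C' ω₀)) using 2 <;>
      exact pr_congr_ae fun ω hω => by simp only [Set.mem_ofPred_eq, key ω hω]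
  · push Not at hc
    have h0 : pr μ {ω | C' ω = c} = 0 := pr_eq_zero_of_ae_not hc
    rw [h0, mul_zero, pr_eq_zero_of_subset (E := {ω | B ω = b ∧ C' ω = c}) (fun ω h => h.2) h0,
      mul_zero]

theorem CondIndep.prod_cond (h : CondIndep μ A B C) :
    CondIndep μ A (fun ω => (B ω, C ω)) C := by
  rw [condIndep_iff_exists_mul] at h ⊢
  intro a c
  obtain ⟨κ, hκ⟩ := h a c
  refine ⟨κ, fun ⟨b, c'⟩ => ?_⟩
  by_cases hc : c' = c
  · subst hc
    simpa only [Prod.mk.injEq, and_assoc, and_self] using hκ b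
  · have hne : ∀ ω ∈ μ.support, ¬ ((B ω, C ω) = (b, c') ∧ C ω = c) := fun ω _ h =>
      hc ((congrArg Prod.snd h.1).symm.trans h.2)
    rw [pr_eq_zero_of_ae_not hne, pr_eq_zero_of_ae_not fun ω hω h => hne ω hω h.2, mul_zero]

theorem condIndep_of_funDep (h : FunDep μ C B) : CondIndep μ A B C := by
  have hunit : CondIndep μ A (fun _ => ()) C := by
    rintro a ⟨⟩ c
    simp only [true_and]
  exact hunit.prod_cond.of_funDep_right (let ⟨f, hf⟩ := h; ⟨fun p => f p.2, hf⟩)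

theorem CondIndep.weakUnion (h : CondIndep μ A (fun ω => (B ω, C ω)) D) :
    CondIndep μ A B (fun ω => (C ω, D ω)) := by
  rw [condIndep_iff_exists_mul] at h ⊢
  rintro a ⟨c, d⟩
  obtain ⟨κ, hκ⟩ := h a d
  exact ⟨κ, fun b => by simpa only [Prod.mk.injEq, and_assoc] using hκ (b, c)⟩

theorem CondIndep.contraction (h₁ : CondIndep μ A B D)
    (h₂ : CondIndep μ A C (fun ω => (B ω, D ω))) :
    CondIndep μ A (fun ω => (B ω, C ω)) D := by
  rw [condIndep_iff_exists_mul] at h₁ ⊢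
  intro a d
  obtain ⟨κ, hκ⟩ := h₁ a d
  refine ⟨κ, fun ⟨b, c⟩ => ?_⟩
  have h₂' := h₂ a c (b, d)
  simp only [Prod.mk.injEq] at h₂' ⊢
  by_cases hbd : pr μ {ω | B ω = b ∧ D ω = d} = 0
  · rw [pr_eq_zero_of_subset (F := {ω | B ω = b ∧ D ω = d}) (fun ω h => ⟨h.2.1.1, h.2.2⟩) hbd,
      pr_eq_zero_of_subset (F := {ω | B ω = b ∧ D ω = d}) (fun ω h => ⟨h.1.1, h.2⟩) hbd,
      mul_zero]
  · rw [hκ b] at h₂'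
    apply (ENNReal.mul_left_inj hbd (pr_ne_top _)).1
    simp only [and_assoc, and_left_comm] at h₂' ⊢
    rw [h₂']
    ring

-- The intersection property, with positivity replaced by `A ⊥⊥ E | C`: it makes every `(a, c)`
-- of positive mass compatible with a fixed `e` of positive mass given `c`.
theorem CondIndep.intersection {υ ε : Type} {U : Ω → υ} {E : Ω → ε}
    (hUE : CondIndep μ U E (fun ω => (A ω, C ω)))
    (hUAC : CondIndep μ U (fun ω => (A ω, C ω)) E) (hAE : CondIndep μ A E C) :
    CondIndep μ U A C := by
  rw [condIndep_iff_exists_mul]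
  intro u c
  by_cases hc : ∃ e, pr μ {ω | E ω = e ∧ C ω = c} ≠ 0
  · obtain ⟨e, he⟩ := hc
    obtain ⟨κ, hκ⟩ := condIndep_iff_exists_mul.1 hUAC u e
    refine ⟨κ, fun a => ?_⟩
    by_cases hac : pr μ {ω | A ω = a ∧ C ω = c} = 0
    · rw [hac, mul_zero]
      exact pr_eq_zero_of_subset (fun ω h => h.2) hac
    have hace : pr μ {ω | A ω = a ∧ E ω = e ∧ C ω = c} ≠ 0 := fun h0 => by
      have := hAE a e c
      rw [h0, zero_mul] at this
      exact mul_ne_zero hac he this.symm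
    have h₁ := hUE u e (a, c)
    have h₂ := hκ (a, c)
    simp only [Prod.mk.injEq] at h₁ h₂
    apply (ENNReal.mul_left_inj hace (pr_ne_top _)).1
    simp only [and_assoc, and_comm, and_left_comm] at h₁ h₂ hace ⊢
    rw [← h₁, h₂]
    ring
  · push Not at hc
    have h0 : pr μ {ω | C ω = c} = 0 := by
      rw [pr_eq_tsum_fiber E]
      simpa only [and_comm] using ENNReal.tsum_eq_zero.2 hc
    exact ⟨0, fun a => by rw [zero_mul]; exact pr_eq_zero_of_subset (fun ω h => h.2.2) h0⟩

theorem condIndep_prod_of_markov {υ ε : Type} {U : Ω → υ} {E : Ω → ε}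
    (h₁ : CondIndep μ (fun ω => (U ω, A ω)) D C) (h₂ : CondIndep μ U (fun ω => (A ω, C ω)) E)
    (hDE : FunDep μ D E) : CondIndep μ U (fun ω => (A ω, D ω)) C := by
  have hUD : CondIndep μ U D (fun ω => (A ω, C ω)) := h₁.symm.weakUnion.symm
  have hAE : CondIndep μ A E C :=
    (h₁.of_funDep_left (funDep_comp _ Prod.snd)).of_funDep_right hDE
  exact ((hUD.of_funDep_right hDE).intersection h₂ hAE).contraction hUD

end CondIndep

section Sufficiency

variable {Ω υ γ δ ε : Type} {μ : PMF Ω} {U : Ω → υ} {W : Ω → γ} {V : Ω → δ} {T : Ω → ε}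

theorem SuffStat.trans (hV : SuffStat μ W U V) (hT : SuffStat μ V U T) : SuffStat μ W U T := by
  obtain ⟨hWV, hUWV⟩ := hV
  obtain ⟨hVT, hUVT⟩ := hT
  have hVVT : InfoEq μ V (fun ω => (V ω, T ω)) :=
    ⟨(funDep_comp V id).prod hVT, funDep_comp _ Prod.fst⟩
  exact ⟨hWV.trans hVT,
    (hUVT.contraction (hUWV.of_infoEq_cond hVVT)).of_funDep_right ⟨Prod.snd, fun _ _ => rfl⟩⟩

theorem MinSuffStat.of_suffStat (hT : MinSuffStat μ W U T) (hV : SuffStat μ W U V) :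
    MinSuffStat μ V U T :=
  ⟨⟨hT.2 _ V hV, hT.1.2.of_funDep_right hV.1⟩, fun _ T' hT' => hT.2 _ T' (hV.trans hT')⟩

end Sufficiency

section MarkovChain

variable {Ω υ α : Type} {μ : PMF Ω}

open Classical in
/-- The joint variable `(V t)_{t ∈ S}`, encoded with `none` at the indices outside `S`. -/
noncomputable def seqOn (V : ℕ → Ω → α) (S : Set ℕ) : Ω → ℕ → Option α :=
  fun ω t => if t ∈ S then some (V t ω) else none

variable {V : ℕ → Ω → α}

theorem funDep_seqOn_of_subset {S S' : Set ℕ} (h : S ⊆ S') :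
    FunDep μ (seqOn V S') (seqOn V S) := by
  classical
  refine ⟨fun f t => if t ∈ S then f t else none, fun ω _ => funext fun t => ?_⟩
  by_cases ht : t ∈ S
  · simp [seqOn, ht, h ht]
  · simp [seqOn, ht]

theorem funDep_seqOn_insert {S S' : Set ℕ} {j : ℕ} (h : S ⊆ insert j S') :
    FunDep μ (fun ω => (seqOn V S' ω, V j ω)) (seqOn V S) := by
  classical
  refine ⟨fun p t => if t ∈ S then (if t = j then some p.2 else p.1 t) else none,
    fun ω _ => funext fun t => ?_⟩
  by_cases ht : t ∈ S
  · by_cases htj : t = j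
    · subst htj
      simp [seqOn, ht]
    · have ht' : t ∈ S' := (h ht).resolve_left htj
      simp [seqOn, ht, htj, ht']
  · simp [seqOn, ht]

theorem funDep_apply_seqOn {S : Set ℕ} {j : ℕ} (hj : j ∈ S) : FunDep μ (seqOn V S) (V j) := by
  obtain ⟨ω₀, -⟩ := μ.support_nonempty
  exact ⟨fun f => (f j).getD (V j ω₀), fun ω _ => by simp [seqOn, hj]⟩

theorem funDep_seqOn_union {S S₁ S₂ : Set ℕ} (h : S ⊆ S₁ ∪ S₂) :
    FunDep μ (fun ω => (seqOn V S₁ ω, seqOn V S₂ ω)) (seqOn V S) := by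
  classical
  refine ⟨fun p t => if t ∈ S then (if t ∈ S₁ then p.1 t else p.2 t) else none,
    fun ω _ => funext fun t => ?_⟩
  by_cases ht : t ∈ S
  · by_cases ht₁ : t ∈ S₁
    · simp [seqOn, ht, ht₁]
    · simp [seqOn, ht, ht₁, (h ht).resolve_left ht₁]
  · simp [seqOn, ht]

theorem funDep_seqOn {γ : Type} {W : Ω → γ} (g : γ → ℕ → α) (hV : ∀ t ω, V t ω = g (W ω) t)
    (S : Set ℕ) : FunDep μ W (seqOn V S) := by
  classical
  exact ⟨fun w t => if t ∈ S then some (g w t) else none, fun ω _ => funext fun t => by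
    simp [seqOn, hV]⟩

theorem funDep_seqOn_Iic {p N : ℕ} :
    FunDep μ (fun ω => ((seqOn V (Set.Iio p) ω, seqOn V (Set.Ioc p N) ω), V p ω))
      (seqOn V (Set.Iic N)) :=
  (((funDep_comp _ Prod.fst).trans (funDep_seqOn_union subset_rfl)).prod
    (funDep_comp _ Prod.snd)).trans (funDep_seqOn_insert (by intro t ht; simp at ht ⊢; omega))

theorem condIndep_past_future {U : Ω → υ} {N : ℕ}
    (h : ∀ p < N, CondIndep μ (V (p + 1)) (fun ω => (U ω, seqOn V (Set.Iio p) ω)) (V p))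
    {j : ℕ} (hj : j ≤ N) :
    CondIndep μ (fun ω => (U ω, seqOn V (Set.Iio j) ω)) (seqOn V (Set.Ioc j N)) (V j) := by
  have base :
      CondIndep μ (fun ω => (U ω, seqOn V (Set.Iio j) ω)) (seqOn V (Set.Ioc j j)) (V j) :=
    condIndep_of_funDep ⟨fun _ _ => none, fun ω _ => funext fun t => by simp [seqOn]⟩
  induction N with
  | zero =>
    obtain rfl : j = 0 := by omega
    exact base
  | succ N ih =>
    rcases hj.eq_or_lt with rfl | hj
    · exact base
    have hjN : j ≤ N := by omega
    have hrecent :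
        FunDep μ (fun ω => (seqOn V (Set.Ioc j N) ω, V j ω)) (seqOn V (Set.Icc j N)) :=
      funDep_seqOn_insert (by intro t ht; simp at ht ⊢; omega)
    have hpast : FunDep μ (fun ω => ((U ω, seqOn V (Set.Iio N) ω), V N ω))
        (fun ω => ((U ω, seqOn V (Set.Iio j) ω), (seqOn V (Set.Ioc j N) ω, V j ω))) := by
      have hall : FunDep μ (fun ω => ((U ω, seqOn V (Set.Iio N) ω), V N ω))
          (seqOn V (Set.Iic N)) :=
        (funDep_comp _ fun p => (p.1.2, p.2)).trans
          (funDep_seqOn_insert (by intro t ht; simp at ht ⊢; omega))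
      exact ((funDep_comp _ fun p => p.1.1).prod ((funDep_comp _ fun p => p.1.2).trans
        (funDep_seqOn_of_subset (Set.Iio_subset_Iio hjN)))).prod
        ((hall.trans (funDep_seqOn_of_subset Set.Ioc_subset_Iic_self)).prod
          (hall.trans (funDep_apply_seqOn (by simp; omega))))
    have hstep : CondIndep μ (V (N + 1)) (fun ω => (U ω, seqOn V (Set.Iio j) ω))
        (fun ω => (seqOn V (Set.Ioc j N) ω, V j ω)) :=
      ((h N (by omega)).prod_cond.of_funDep_right hpast).weakUnion.of_infoEq_cond
        ⟨funDep_comp _ Prod.fst, (funDep_comp _ id).prod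
          (hrecent.trans (funDep_apply_seqOn (by simp; omega)))⟩
    exact ((ih (fun p hp => h p (by omega)) hjN).contraction hstep.symm).of_funDep_right
      (funDep_seqOn_insert (by intro t ht; simp at ht ⊢; omega))

end MarkovChain

section Graph

variable {n k : ℕ} (i : Fin n)

-- `chainNode i t` is the `t`-th node of `Y_i → X_i^1 → ⋯ → X_i^k → Z_i` (for `t ≤ k + 1`), and
-- `chainPos` the inverse position on that chain.
def chainNode : ℕ → BNode n k
  | 0 => .y i
  | t + 1 => if h : t < k then .x i ⟨t, h⟩ else .z i

def chainPos : BNode n k → ℕ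
  | .u _ => 0
  | .y _ => 0
  | .x _ j => j + 1
  | .z _ => k + 1

theorem chainNode_succ (j : Fin k) : chainNode (k := k) i (j + 1) = .x i j := by
  simp [chainNode]

theorem chainNode_last : chainNode (k := k) i (k + 1) = .z i := by
  simp [chainNode]

theorem chainNode_ne_u (t : ℕ) (i' : Fin n) : chainNode (k := k) i t ≠ .u i' := by
  rcases t with _ | t
  · simp [chainNode]
  · by_cases h : t < k <;> simp [chainNode, h]

theorem chainPos_chainNode {t : ℕ} (ht : t ≤ k + 1) : chainPos (chainNode (k := k) i t) = t := by
  rcases t with _ | t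
  · rfl
  · by_cases h : t < k <;> simp [chainNode, chainPos, h]; omega

variable {i} (C1 : Finset (Fin n))

theorem edge1_chainNode_iff (hk : 1 ≤ k) {p : ℕ} (hp : p ≤ k) (v : BNode n k) :
    edge1 n k C1 v (chainNode i (p + 1)) ↔ v = chainNode i p := by
  rcases p with _ | p
  · have h0 : (0 : ℕ) < k := hk
    cases v <;> simp [chainNode, edge1, h0]
  · have hp' : p < k := by omega
    by_cases hpk : p + 1 < k <;> cases v <;> simp [chainNode, edge1, hpk, hp', Fin.ext_iff] <;>
      omega

theorem chainPos_le_of_edge1 {v w : BNode n k} (h : edge1 n k C1 v w) (hv : 1 ≤ chainPos v) :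
    chainPos v ≤ chainPos w := by
  cases v <;> cases w <;> simp_all [edge1, chainPos]

theorem le_chainPos_of_reflTransGen {p : ℕ} (hp : p ≤ k) {v : BNode n k}
    (hr : Relation.ReflTransGen (edge1 n k C1) (chainNode i (p + 1)) v) :
    p + 1 ≤ chainPos v := by
  induction hr with
  | refl => rw [chainPos_chainNode i (by omega)]
  | tail _ hvw ih => exact ih.trans (chainPos_le_of_edge1 C1 hvw (by omega))

theorem mem_nonDescSet_edge1 (hk : 1 ≤ k) {p : ℕ} (hp : p ≤ k) {v : BNode n k}
    (hv : chainPos v ≤ p) (hne : v ≠ chainNode i p) :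
    v ∈ nonDescSet (edge1 n k C1) (chainNode i (p + 1)) :=
  ⟨fun hr => by have := le_chainPos_of_reflTransGen C1 hp hr; omega,
    fun he => hne ((edge1_chainNode_iff C1 hk hp v).1 he)⟩

variable (C2 : Finset (Fin n)) (A : Fin k → Finset (Fin n)) (b : Fin k → Fin n)

theorem edge2_y_iff (v : BNode n k) : edge2 n k C2 A b v (.y i) ↔ v = .z i := by
  cases v <;> simp [edge2, eq_comm]

theorem eq_y_of_reflTransGen_edge2 {v : BNode n k}
    (hr : Relation.ReflTransGen (edge2 n k C2 A b) (.y i) v) : v = .y i := by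
  induction hr with
  | refl => rfl
  | tail _ hvw ih => subst ih; cases ‹BNode n k› <;> simp [edge2] at hvw

theorem mem_nonDescSet_edge2_y {v : BNode n k} (hy : v ≠ .y i) (hz : v ≠ .z i) :
    v ∈ nonDescSet (edge2 n k C2 A b) (.y i) :=
  ⟨fun hr => hy (eq_y_of_reflTransGen_edge2 C2 A b hr),
    fun he => hz ((edge2_y_iff C2 A b v).1 he)⟩

end Graph

theorem SatisfiesBN.condIndep_of_parent {Ω ν : Type} {β : ν → Type} {μ : PMF Ω}
    {X : ∀ v, Ω → β v} {E : ν → ν → Prop} (h : SatisfiesBN μ X E) {w w₀ : ν}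
    (hpa : ∀ v, E v w ↔ v = w₀) :
    CondIndep μ (X w) (fun ω => fun v : nonDescSet E w => X v.1 ω) (X w₀) := by
  refine (h w).of_infoEq_cond ⟨⟨fun f => f ⟨w₀, (hpa w₀).2 rfl⟩, fun _ _ => rfl⟩,
    ⟨fun x v => ((hpa v.1).1 v.2) ▸ x, fun ω _ => funext fun ⟨v, hv⟩ => ?_⟩⟩
  obtain rfl := (hpa v).1 hv
  rfl

section Networks

variable {n k : ℕ} {Ω : Type} {μ : PMF Ω} {X : BNode n k → Ω → ℕ} (i : Fin n)

def tupleCoord (w : (Fin k → ℕ) × ℕ × ℕ) : ℕ → ℕ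
  | 0 => w.2.1
  | t + 1 => if h : t < k then w.1 ⟨t, h⟩ else w.2.2

theorem tupleCoord_tupleVar (ω : Ω) (t : ℕ) :
    tupleCoord (tupleVar X i ω) t = X (chainNode i t) ω := by
  rcases t with _ | t
  · rfl
  · by_cases h : t < k <;> simp [tupleCoord, chainNode, tupleVar, h]

theorem funDep_tupleVar_of_seqOn :
    FunDep μ (seqOn (fun t => X (chainNode i t)) (Set.Iic (k + 1))) (tupleVar X i) := by
  refine ⟨fun f => (fun j => (f (j + 1)).getD 0, (f 0).getD 0, (f (k + 1)).getD 0),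
    fun ω _ => ?_⟩
  refine Prod.ext (funext fun j => ?_) (Prod.ext ?_ ?_)
  · simp [seqOn, tupleVar, chainNode_succ, j.isLt.le]
  · simp [seqOn, tupleVar, chainNode]
  · simp [seqOn, tupleVar, chainNode_last]

theorem condIndep_chain_step_of_edge1 {C1 : Finset (Fin n)}
    (h1 : SatisfiesBN μ X (edge1 n k C1)) (hk : 1 ≤ k) {p : ℕ} (hp : p < k + 1) :
    CondIndep μ (X (chainNode i (p + 1)))
      (fun ω => (Ujoint X ω, seqOn (fun t => X (chainNode i t)) (Set.Iio p) ω))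
      (X (chainNode i p)) := by
  have hp' : p ≤ k := by omega
  have hu (i' : Fin n) : .u i' ∈ nonDescSet (edge1 n k C1) (chainNode i (p + 1)) :=
    mem_nonDescSet_edge1 C1 hk hp' (Nat.zero_le p) (chainNode_ne_u i p i').symm
  have hc {t : ℕ} (ht : t < p) :
      chainNode i t ∈ nonDescSet (edge1 n k C1) (chainNode i (p + 1)) := by
    have hpos (s : ℕ) (hs : s ≤ p) : chainPos (chainNode (k := k) i s) = s :=
      chainPos_chainNode i (by omega)
    refine mem_nonDescSet_edge1 C1 hk hp' (by rw [hpos t ht.le]; omega) fun h => ?_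
    have := congrArg chainPos h
    rw [hpos t ht.le, hpos p le_rfl] at this
    omega
  refine (h1.condIndep_of_parent (edge1_chainNode_iff C1 hk hp')).of_funDep_right
    ⟨fun f => (fun i' => f ⟨.u i', hu i'⟩,
      fun t => if ht : t < p then some (f ⟨chainNode i t, hc ht⟩) else none),
      fun ω _ => Prod.ext rfl (funext fun t => ?_)⟩
  by_cases ht : t < p <;> simp [seqOn, ht]

theorem condIndep_y_of_edge2 {C2 : Finset (Fin n)} {A : Fin k → Finset (Fin n)}
    {b : Fin k → Fin n} (h2 : SatisfiesBN μ X (edge2 n k C2 A b)) :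
    CondIndep μ (fun ω => (Ujoint X ω, fun j => X (.x i j) ω)) (X (.y i)) (X (.z i)) :=
  ((h2.condIndep_of_parent (edge2_y_iff C2 A b)).of_funDep_right
    ⟨fun f => (fun i' => f ⟨.u i', mem_nonDescSet_edge2_y C2 A b (by simp) (by simp)⟩,
      fun j => f ⟨.x i j, mem_nonDescSet_edge2_y C2 A b (by simp) (by simp)⟩),
      fun _ _ => rfl⟩).symm

theorem condIndep_tupleVar_of_past_future {p : ℕ}
    (h : CondIndep μ (Ujoint X) (fun ω => (seqOn (fun t => X (chainNode i t)) (Set.Iio p) ω,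
      seqOn (fun t => X (chainNode i t)) (Set.Ioc p (k + 1)) ω)) (X (chainNode i p))) :
    CondIndep μ (Ujoint X) (tupleVar X i) (X (chainNode i p)) :=
  h.prod_cond.of_funDep_right (funDep_seqOn_Iic.trans (funDep_tupleVar_of_seqOn i))

variable {C1 C2 : Finset (Fin n)} {A : Fin k → Finset (Fin n)} {b : Fin k → Fin n}

theorem suffStat_tupleVar_y (h1 : SatisfiesBN μ X (edge1 n k C1)) (hk : 1 ≤ k) :
    SuffStat μ (tupleVar X i) (Ujoint X) (X (.y i)) := by
  have h := condIndep_past_future (U := Ujoint X) (V := fun t => X (chainNode i t))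
    (fun p hp => condIndep_chain_step_of_edge1 i h1 hk hp) (Nat.zero_le (k + 1))
  refine ⟨funDep_comp (tupleVar X i) fun w => w.2.1,
    condIndep_tupleVar_of_past_future i (p := 0) ?_⟩
  exact (h.of_funDep_left (funDep_comp _ Prod.fst)).of_funDep_right
    ((funDep_seqOn_of_subset fun t ht => absurd ht (Nat.not_lt_zero t)).prod (funDep_comp _ id))

theorem suffStat_tupleVar_z (h1 : SatisfiesBN μ X (edge1 n k C1))
    (h2 : SatisfiesBN μ X (edge2 n k C2 A b)) (hk : 1 ≤ k) :
    SuffStat μ (tupleVar X i) (Ujoint X) (X (.z i)) := by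
  have h := condIndep_prod_of_markov (condIndep_y_of_edge2 i h2)
    ((suffStat_tupleVar_y i h1 hk).2.of_funDep_right
      (funDep_comp (tupleVar X i) fun w => (w.1, w.2.2)))
    (funDep_comp _ id)
  exact ⟨funDep_comp (tupleVar X i) fun w => w.2.2,
    h.prod_cond.of_funDep_right ⟨fun p => (p.1.1, p.1.2, p.2), fun _ _ => rfl⟩⟩

theorem suffStat_tupleVar_x (h1 : SatisfiesBN μ X (edge1 n k C1))
    (h2 : SatisfiesBN μ X (edge2 n k C2 A b)) (hk : 1 ≤ k) (j : Fin k) :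
    SuffStat μ (tupleVar X i) (Ujoint X) (X (.x i j)) := by
  have hcoord (t : ℕ) (ω : Ω) : X (chainNode i t) ω = tupleCoord (tupleVar X i ω) t :=
    (tupleCoord_tupleVar i ω t).symm
  have hpast : FunDep μ (tupleVar X i) (fun ω =>
      (seqOn (fun t => X (chainNode i t)) (Set.Iio (j + 1)) ω, X (chainNode i (j + 1)) ω)) :=
    (funDep_seqOn tupleCoord hcoord _).prod ⟨fun w => tupleCoord w (j + 1), fun ω _ => hcoord _ ω⟩
  have hZ :
      FunDep μ (seqOn (fun t => X (chainNode i t)) (Set.Ioc (j + 1) (k + 1))) (X (.z i)) := by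
    rw [← chainNode_last i]
    exact funDep_apply_seqOn (by simp)
  have h := condIndep_prod_of_markov
    (condIndep_past_future (U := Ujoint X) (V := fun t => X (chainNode i t))
      (fun p hp => condIndep_chain_step_of_edge1 i h1 hk hp) (j := j + 1) (by omega))
    ((suffStat_tupleVar_z i h1 h2 hk).2.of_funDep_right hpast) hZ
  refine ⟨funDep_comp (tupleVar X i) fun w => w.1 j, ?_⟩
  rw [← chainNode_succ i j]
  exact condIndep_tupleVar_of_past_future i h

end Networks

theorem networks_minSuffStat_general (n k : ℕ) (hk : 1 ≤ k)
    (C1 C2 : Finset (Fin n))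
    (A : Fin k → Finset (Fin n)) (b : Fin k → Fin n)
    (Ω : Type) (μ : PMF Ω) (X : BNode n k → Ω → ℕ)
    (h1 : SatisfiesBN μ X (edge1 n k C1))
    (h2 : SatisfiesBN μ X (edge2 n k C2 A b))
    (β : Fin n → Type) (T : ∀ i, Ω → β i)
    (hT : ∀ i, MinSuffStat μ (tupleVar X i) (Ujoint X) (T i)) :
    ∀ (i : Fin n) (j : Fin k),
      MinSuffStat μ (X (.y i)) (Ujoint X) (T i) ∧
      MinSuffStat μ (X (.z i)) (Ujoint X) (T i) ∧
      MinSuffStat μ (X (.x i j)) (Ujoint X) (T i) := fun i j =>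
  ⟨(hT i).of_suffStat (suffStat_tupleVar_y i h1 hk),
    (hT i).of_suffStat (suffStat_tupleVar_z i h1 h2 hk),
    (hT i).of_suffStat (suffStat_tupleVar_x i h1 h2 hk j)⟩

/-- Lemma 6 of the paper: Networks 1 and 2 imply that
`S(Y_i;U) =ι S(Z_i;U) =ι S(X_i^j;U) =ι T_i` for every `i, j`, where
`T_i = S((X_i^1,…,X_i^k,Y_i,Z_i); U)`; i.e. `T_i` is a minimal sufficient statistic of
each of `Y_i`, `Z_i` and `X_i^j` for `U`. -/
theorem networks_minSuffStat (n k : ℕ) (hn : 2 ≤ n) (hk : 1 ≤ k)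
    (C1 C2 : Finset (Fin n)) (hC : Disjoint C1 C2)
    (A : Fin k → Finset (Fin n)) (b : Fin k → Fin n) (hb : ∀ j, b j ∉ A j)
    (Ω : Type) (μ : PMF Ω) (X : BNode n k → Ω → ℕ)
    (hfin : ∀ v, FinSupp μ (X v))
    (h1 : SatisfiesBN μ X (edge1 n k C1))
    (h2 : SatisfiesBN μ X (edge2 n k C2 A b))
    (β : Fin n → Type) (T : ∀ i, Ω → β i)
    (hT : ∀ i, MinSuffStat μ (tupleVar X i) (Ujoint X) (T i)) :
    ∀ (i : Fin n) (j : Fin k),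
      MinSuffStat μ (X (.y i)) (Ujoint X) (T i) ∧
      MinSuffStat μ (X (.z i)) (Ujoint X) (T i) ∧
      MinSuffStat μ (X (.x i j)) (Ujoint X) (T i) :=
  networks_minSuffStat_general n k hk C1 C2 A b Ω μ X h1 h2 β T hT

end Paper
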